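/- Let (X,d) and (Λ,ρ) be compact metric spaces, ω : Λ × X → X continuous, Ω = Λ^ℕ with shift β, and Φ : Ω × X → Ω × X the skew product Φ(σ,x) = (β(σ), ω_{σ_1}(x)). Let ν be a β-invariant Borel probability measure on Ω with ν(F) = 1, where F = {σ : lim_n (1/n) Σ_{i=1}^n diam(ω_{σ_i} ∘ ⋯ ∘ ω_{σ_1}(X)) = 0}. If μ_1 and μ_2 are Φ-invariant Borel probability measures on Ω × X with π_*(μ_1) = π_*(μ_2) = ν, where π(σ,x) = σ, then μ_1 = μ_2. -/

import Mathlib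

/-!
For a bounded continuous `f` and a `skew ω`-invariant `μ`, `∫ f dμ = ∫ f (Φⁿ q) dμ`, and
`Φⁿ (σ, x) = (βⁿ σ, fcomp ω σ n x)` has its fibre coordinate in `range (fcomp ω σ n)`. Replacing
`x` by a fixed `x₀` therefore changes the integrand by at most `ε + C dₙ(σ)`, where `dₙ(σ)` is the
diameter of that range, and leaves a function of `σ` alone, whose integral is the same for every
`μ` with marginal `ν`. So `|∫ f dμ₁ - ∫ f dμ₂| ≤ 2ε + 2C ∫ dₙ dν` for every `n`, and the Cesàro
means of `∫ dₙ dν` tend to `0` by dominated convergence, because `ν (Fset ω) = 1`.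
-/

open Metric Set Filter MeasureTheory

def fcomp {Λ X : Type*} (ω : Λ → X → X) (σ : ℕ → Λ) : ℕ → X → X
  | 0 => id
  | n + 1 => ω (σ n) ∘ fcomp ω σ n

def shift {Λ : Type*} (σ : ℕ → Λ) : ℕ → Λ := fun n => σ (n + 1)

/-- The skew product `Φ(σ, x) = (β(σ), ω_{σ_1}(x))`. -/
def skew {Λ X : Type*} (ω : Λ → X → X) (q : (ℕ → Λ) × X) : (ℕ → Λ) × X :=
  (shift q.1, ω (q.1 0) q.2)

def Fset {Λ X : Type*} [MetricSpace X] (ω : Λ → X → X) : Set (ℕ → Λ) :=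
  {σ | Tendsto (fun n : ℕ => ((n : ℝ))⁻¹ *
      ∑ i ∈ Finset.range n, Metric.diam (Set.range (fcomp ω σ (i + 1))))
    atTop (nhds 0)}

open scoped Topology BoundedContinuousFunction

theorem UniformContinuous.uniformEquicontinuous_curry {T β α : Type*} [UniformSpace T]
    [UniformSpace β] [UniformSpace α] {f : T × β → α} (hf : UniformContinuous f) :
    UniformEquicontinuous (Function.curry f) := by
  intro U hU
  obtain ⟨u, hu, v, hv, huv⟩ := entourageProd_subset (hf hU)
  filter_upwards [hv] with p hp t
  exact huv (show ((t, p.1), (t, p.2)) ∈ entourageProd u v from ⟨refl_mem_uniformity hu, hp⟩)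

/-- A merely continuous `f` need not be Lipschitz in `x`, but this bound is just as good for
integration: it is affine in `dist x y`, so it survives averaging. -/
theorem BoundedContinuousFunction.exists_abs_sub_le_add_mul_dist {T X : Type*} [UniformSpace T]
    [CompactSpace T] [PseudoMetricSpace X] [CompactSpace X] (f : T × X →ᵇ ℝ) {ε : ℝ}
    (hε : 0 < ε) : ∃ C ≥ 0, ∀ t x y, |f (t, x) - f (t, y)| ≤ ε + C * dist x y := by
  obtain ⟨δ, hδ, hδf⟩ := Metric.uniformEquicontinuous_iff.1
    (CompactSpace.uniformContinuous_of_continuous f.continuous).uniformEquicontinuous_curry ε hε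
  refine ⟨2 * ‖f‖ / δ, by positivity, fun t x y => ?_⟩
  rcases lt_or_ge (dist x y) δ with hxy | hxy
  · have hfxy : |f (t, x) - f (t, y)| < ε := hδf x y hxy t
    have : 0 ≤ 2 * ‖f‖ / δ * dist x y := by positivity
    linarith
  · calc |f (t, x) - f (t, y)| ≤ 2 * ‖f‖ := f.dist_le_two_norm _ _
      _ = 2 * ‖f‖ / δ * δ := by field_simp
      _ ≤ ε + 2 * ‖f‖ / δ * dist x y := le_add_of_nonneg_of_le hε.le (by gcongr)

theorem ContinuousMap.diam_range_le_add {α X : Type*} [TopologicalSpace α] [CompactSpace α]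
    [PseudoMetricSpace X] (f g : C(α, X)) :
    diam (range f) ≤ diam (range g) + 2 * dist f g := by
  refine diam_le_of_forall_dist_le (add_nonneg diam_nonneg (by positivity)) ?_
  rintro _ ⟨x, rfl⟩ _ ⟨y, rfl⟩
  calc dist (f x) (f y) ≤ dist (f x) (g x) + dist (g x) (g y) + dist (g y) (f y) :=
        dist_triangle4 _ _ _ _
    _ ≤ dist f g + diam (range g) + dist f g := by
        gcongr
        · exact ContinuousMap.dist_apply_le_dist x
        · exact dist_le_diam_of_mem (isCompact_range g.continuous).isBounded
            (mem_range_self x) (mem_range_self y)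
        · exact dist_comm f g ▸ ContinuousMap.dist_apply_le_dist y
    _ = diam (range g) + 2 * dist f g := by ring

theorem ContinuousMap.lipschitzWith_diam_range {α X : Type*} [TopologicalSpace α]
    [CompactSpace α] [PseudoMetricSpace X] :
    LipschitzWith 2 fun f : C(α, X) => diam (range f) :=
  LipschitzWith.of_le_add_mul 2 fun f g => by exact_mod_cast f.diam_range_le_add g

theorem tendsto_cesaro_integral_of_ae {T : Type*} [MeasurableSpace T] {ν : Measure T}
    [IsFiniteMeasure ν] {d : ℕ → T → ℝ} {B : ℝ} (hd : ∀ i, AEStronglyMeasurable (d i) ν)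
    (hB : ∀ i t, |d i t| ≤ B)
    (hlim : ∀ᵐ t ∂ν, Tendsto (fun n : ℕ => (n : ℝ)⁻¹ * ∑ i ∈ Finset.range n, d i t) atTop (𝓝 0)) :
    Tendsto (fun n : ℕ => (n : ℝ)⁻¹ * ∑ i ∈ Finset.range n, ∫ t, d i t ∂ν) atTop (𝓝 0) := by
  have hint : ∀ i, Integrable (d i) ν := fun i =>
    Integrable.of_bound (hd i) B (Eventually.of_forall (hB i))
  have hmean : ∀ n : ℕ, (n : ℝ)⁻¹ * ∑ i ∈ Finset.range n, ∫ t, d i t ∂ν =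
      ∫ t, (n : ℝ)⁻¹ * ∑ i ∈ Finset.range n, d i t ∂ν := fun n => by
    rw [integral_const_mul, integral_finsetSum _ fun i _ => hint i]
  have hbound : ∀ᶠ n : ℕ in atTop,
      ∀ᵐ t ∂ν, ‖(n : ℝ)⁻¹ * ∑ i ∈ Finset.range n, d i t‖ ≤ B := by
    filter_upwards [eventually_ge_atTop 1] with n hn
    refine Eventually.of_forall fun t => ?_
    have hn' : (0 : ℝ) < n := by exact_mod_cast hn
    calc ‖(n : ℝ)⁻¹ * ∑ i ∈ Finset.range n, d i t‖
        ≤ (n : ℝ)⁻¹ * ∑ i ∈ Finset.range n, |d i t| := by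
          rw [norm_mul, Real.norm_eq_abs, abs_inv, Nat.abs_cast]
          gcongr
          exact Finset.abs_sum_le_sum_abs _ _
      _ ≤ (n : ℝ)⁻¹ * ∑ _i ∈ Finset.range n, B := by gcongr with i; exact hB i t
      _ = B := by simp [hn'.ne']
  have hmeas : ∀ n : ℕ, AEStronglyMeasurable
      (fun t => (n : ℝ)⁻¹ * ∑ i ∈ Finset.range n, d i t) ν := fun n =>
    (Finset.aestronglyMeasurable_fun_sum _ fun i _ => hd i).const_mul _
  have := tendsto_integral_filter_of_dominated_convergence (fun _ => B)
    (Eventually.of_forall hmeas) hbound (integrable_const B) hlim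
  simp_rw [hmean]
  simpa using this

theorem nonpos_of_le_mul_of_tendsto_cesaro {a K : ℝ} {c : ℕ → ℝ} (h : ∀ i, a ≤ K * c i)
    (hc : Tendsto (fun n : ℕ => (n : ℝ)⁻¹ * ∑ i ∈ Finset.range n, c i) atTop (𝓝 0)) :
    a ≤ 0 := by
  refine ge_of_tendsto (by simpa using hc.const_mul K)
    ((eventually_ge_atTop 1).mono fun n hn => ?_)
  have hn' : (0 : ℝ) < n := by exact_mod_cast hn
  calc a = (n : ℝ)⁻¹ * ∑ _i ∈ Finset.range n, a := by simp [hn'.ne']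
    _ ≤ (n : ℝ)⁻¹ * ∑ i ∈ Finset.range n, K * c i := by gcongr with i; exact h i
    _ = K * ((n : ℝ)⁻¹ * ∑ i ∈ Finset.range n, c i) := by rw [← Finset.mul_sum]; ring

theorem abs_integral_sub_integral_le_of_map_fst {T X : Type*} [MeasurableSpace T]
    [MeasurableSpace X] {μ : Measure (T × X)} {ν : Measure T} (hμ : μ.map Prod.fst = ν)
    {φ : T × X → ℝ} {ψ b : T → ℝ} (hφ : Integrable φ μ) (hψ : Integrable ψ ν)
    (hb : Integrable b ν) (h : ∀ p, |φ p - ψ p.1| ≤ b p.1) :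
    |∫ p, φ p ∂μ - ∫ t, ψ t ∂ν| ≤ ∫ t, b t ∂ν := by
  subst hμ
  have hψ' : Integrable (fun p : T × X => ψ p.1) μ := hψ.comp_measurable measurable_fst
  rw [integral_map measurable_fst.aemeasurable hψ.aestronglyMeasurable,
    integral_map measurable_fst.aemeasurable hb.aestronglyMeasurable, ← integral_sub hφ hψ']
  exact norm_integral_le_of_norm_le (f := fun p => φ p - ψ p.1)
    (hb.comp_measurable measurable_fst) (Eventually.of_forall h)

theorem Continuous.integrable_of_compactSpace {α E : Type*} [TopologicalSpace α] [CompactSpace α]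
    [MeasurableSpace α] [OpensMeasurableSpace α] [NormedAddCommGroup E] {μ : Measure α}
    [IsFiniteMeasure μ] {g : α → E} (hg : Continuous g) : Integrable g μ :=
  hg.integrable_of_hasCompactSupport (.of_compactSpace g)

section SkewProduct

variable {Λ X : Type*} {ω : Λ → X → X}

theorem shift_iterate_apply (σ : ℕ → Λ) (n k : ℕ) : shift^[n] σ k = σ (k + n) := by
  induction n generalizing σ with
  | zero => rfl
  | succ n ih => rw [Function.iterate_succ_apply, ih]; rfl

theorem skew_iterate (q : (ℕ → Λ) × X) (n : ℕ) :
    (skew ω)^[n] q = (shift^[n] q.1, fcomp ω q.1 n q.2) := by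
  induction n with
  | zero => rfl
  | succ n ih =>
    rw [Function.iterate_succ_apply', ih, skew, ← Function.iterate_succ_apply' shift]
    simp only [shift_iterate_apply, zero_add]
    rfl

variable [TopologicalSpace Λ] [TopologicalSpace X]

theorem continuous_shift : Continuous (shift : (ℕ → Λ) → ℕ → Λ) :=
  continuous_pi fun n => continuous_apply (n + 1)

theorem continuous_fcomp (hω : Continuous fun q : Λ × X => ω q.1 q.2) (n : ℕ) :
    Continuous fun q : (ℕ → Λ) × X => fcomp ω q.1 n q.2 := by
  induction n with
  | zero => exact continuous_snd
  | succ n ih => exact hω.comp (((continuous_apply n).comp continuous_fst).prodMk ih)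

theorem continuous_skew (hω : Continuous fun q : Λ × X => ω q.1 q.2) : Continuous (skew ω) :=
  (continuous_shift.comp continuous_fst).prodMk
    (hω.comp (f := fun q : (ℕ → Λ) × X => (q.1 0, q.2)) (by fun_prop))

end SkewProduct

section Diameter

variable {Λ X : Type*} [TopologicalSpace Λ] [MetricSpace X] [CompactSpace X] {ω : Λ → X → X}

theorem continuous_diam_range_fcomp (hω : Continuous fun q : Λ × X => ω q.1 q.2) (n : ℕ) :
    Continuous fun σ : ℕ → Λ => diam (range (fcomp ω σ n)) :=
  let F : C((ℕ → Λ) × X, X) := ⟨_, continuous_fcomp hω n⟩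
  ((ContinuousMap.lipschitzWith_diam_range (α := X) (X := X)).continuous.comp
    F.curry.continuous).congr fun _ => rfl

theorem measurableSet_Fset [MeasurableSpace Λ] [OpensMeasurableSpace (ℕ → Λ)]
    (hω : Continuous fun q : Λ × X => ω q.1 q.2) : MeasurableSet (Fset ω) :=
  measurableSet_tendsto _ fun _ =>
    (continuous_const.mul (continuous_finsetSum _ fun i _ =>
      continuous_diam_range_fcomp hω (i + 1))).measurable

end Diameter

theorem abs_integral_sub_integral_fcomp_le {Λ X : Type*} [TopologicalSpace Λ]
    [CompactSpace Λ] [MeasurableSpace Λ] [MetricSpace X] [CompactSpace X] [MeasurableSpace X]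
    [OpensMeasurableSpace (ℕ → Λ)] [OpensMeasurableSpace ((ℕ → Λ) × X)] {ω : Λ → X → X}
    (hω : Continuous fun q : Λ × X => ω q.1 q.2) {ν : Measure (ℕ → Λ)} [IsProbabilityMeasure ν]
    {μ : Measure ((ℕ → Λ) × X)} [IsFiniteMeasure μ] (hΦ : MeasurePreserving (skew ω) μ μ)
    (hμ : μ.map Prod.fst = ν) {f : (ℕ → Λ) × X →ᵇ ℝ} {ε C : ℝ} (hC : 0 ≤ C)
    (hf : ∀ σ x y, |f (σ, x) - f (σ, y)| ≤ ε + C * dist x y) (x₀ : X) (n : ℕ) :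
    |∫ q, f q ∂μ - ∫ σ, f (shift^[n] σ, fcomp ω σ n x₀) ∂ν| ≤
      ε + C * ∫ σ, diam (range (fcomp ω σ n)) ∂ν := by
  have hdiam := continuous_diam_range_fcomp hω n
  have hg : Continuous fun σ => f (shift^[n] σ, fcomp ω σ n x₀) :=
    f.continuous.comp ((continuous_shift.iterate n).prodMk
      ((continuous_fcomp hω n).comp (continuous_id.prodMk continuous_const)))
  have hΦn := hΦ.iterate n
  have hfΦn : ∫ q, f q ∂μ = ∫ q, f ((skew ω)^[n] q) ∂μ := by
    conv_lhs => rw [← hΦn.map_eq]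
    exact integral_map hΦn.measurable.aemeasurable f.continuous.aestronglyMeasurable
  have hpointwise : ∀ q : (ℕ → Λ) × X,
      |f ((skew ω)^[n] q) - f (shift^[n] q.1, fcomp ω q.1 n x₀)| ≤
        ε + C * diam (range (fcomp ω q.1 n)) := fun q => by
    rw [skew_iterate]
    refine (hf _ _ _).trans ?_
    gcongr
    exact dist_le_diam_of_mem isBounded_of_compactSpace (mem_range_self _) (mem_range_self _)
  have hdiam_int : Integrable (fun σ => C * diam (range (fcomp ω σ n))) ν :=
    hdiam.integrable_of_compactSpace.const_mul C
  have hintegral_bound : ∫ σ, (ε + C * diam (range (fcomp ω σ n))) ∂ν =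
      ε + C * ∫ σ, diam (range (fcomp ω σ n)) ∂ν := by
    rw [integral_add (integrable_const ε) hdiam_int, integral_const_mul]
    simp
  rw [hfΦn, ← hintegral_bound]
  exact abs_integral_sub_integral_le_of_map_fst hμ
    ((hΦn.integrable_comp f.continuous.aestronglyMeasurable).2 (f.integrable μ))
    hg.integrable_of_compactSpace ((integrable_const ε).add hdiam_int) hpointwise

theorem stmt8_general {X Λ : Type*} [MetricSpace X] [CompactSpace X]
    [MeasurableSpace X] [BorelSpace X]
    [MetricSpace Λ] [CompactSpace Λ] [MeasurableSpace Λ] [BorelSpace Λ]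
    (ω : Λ → X → X) (hω : Continuous fun q : Λ × X => ω q.1 q.2)
    (ν : Measure (ℕ → Λ)) [IsProbabilityMeasure ν]
    (hF : ν (Fset ω) = 1)
    (μ1 μ2 : Measure ((ℕ → Λ) × X))
    [IsProbabilityMeasure μ1] [IsProbabilityMeasure μ2]
    (h1 : Measure.map (skew ω) μ1 = μ1) (h2 : Measure.map (skew ω) μ2 = μ2)
    (hp1 : Measure.map Prod.fst μ1 = ν) (hp2 : Measure.map Prod.fst μ2 = ν) :
    μ1 = μ2 := by
  obtain ⟨-, x₀⟩ := (nonempty_of_isProbabilityMeasure μ1).some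
  have hΦ1 : MeasurePreserving (skew ω) μ1 μ1 := ⟨(continuous_skew hω).measurable, h1⟩
  have hΦ2 : MeasurePreserving (skew ω) μ2 μ2 := ⟨(continuous_skew hω).measurable, h2⟩
  have hFae : ∀ᵐ σ ∂ν, σ ∈ Fset ω :=
    (ae_iff_measure_eq (measurableSet_Fset hω).nullMeasurableSet).2 (hF.trans measure_univ.symm)
  have hcesaro := tendsto_cesaro_integral_of_ae (ν := ν)
    (d := fun i σ => diam (range (fcomp ω σ (i + 1)))) (B := diam (univ : Set X))
    (fun i => (continuous_diam_range_fcomp hω (i + 1)).aestronglyMeasurable)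
    (fun i σ => (abs_of_nonneg diam_nonneg).trans_le
      (diam_mono (subset_univ _) isBounded_of_compactSpace))
    hFae
  refine ext_of_forall_integral_eq_of_IsFiniteMeasure fun f =>
    eq_of_forall_dist_le fun ε hε => ?_
  obtain ⟨C, hC, hfC⟩ := f.exists_abs_sub_le_add_mul_dist (half_pos hε)
  refine sub_nonpos.1 (nonpos_of_le_mul_of_tendsto_cesaro (K := 2 * C) (fun i => ?_) hcesaro)
  have e1 := abs_integral_sub_integral_fcomp_le hω hΦ1 hp1 hC hfC x₀ (i + 1)
  have e2 := abs_integral_sub_integral_fcomp_le hω hΦ2 hp2 hC hfC x₀ (i + 1)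
  set g := ∫ σ, f (shift^[i + 1] σ, fcomp ω σ (i + 1) x₀) ∂ν
  rw [Real.dist_eq]
  linarith [abs_sub_le (∫ q, f q ∂μ1) g (∫ q, f q ∂μ2), abs_sub_comm (∫ q, f q ∂μ2) g]

theorem stmt8 {X Λ : Type*} [MetricSpace X] [CompactSpace X]
    [MeasurableSpace X] [BorelSpace X]
    [MetricSpace Λ] [CompactSpace Λ] [MeasurableSpace Λ] [BorelSpace Λ]
    (ω : Λ → X → X) (hω : Continuous fun q : Λ × X => ω q.1 q.2)
    (ν : Measure (ℕ → Λ)) [IsProbabilityMeasure ν]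
    (hinv : Measure.map shift ν = ν) (hF : ν (Fset ω) = 1)
    (μ1 μ2 : Measure ((ℕ → Λ) × X))
    [IsProbabilityMeasure μ1] [IsProbabilityMeasure μ2]
    (h1 : Measure.map (skew ω) μ1 = μ1) (h2 : Measure.map (skew ω) μ2 = μ2)
    (hp1 : Measure.map Prod.fst μ1 = ν) (hp2 : Measure.map Prod.fst μ2 = ν) :
    μ1 = μ2 :=
  stmt8_general ω hω ν hF μ1 μ2 h1 h2 hp1 hp2
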